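/- Every dihedral Artin group A_{I_n} (two generators, edge label n ≥ 2) is normally poly-free. -/

import Mathlib

universe u v

/-- Poly-free with a subnormal chain of length `n` (length at most `n`,
since successive subgroups may coincide): there is a chain
`1 = G₀ ⊴ G₁ ⊴ ⋯ ⊴ Gₙ = G` with each quotient `Gᵢ₊₁/Gᵢ` a free group. -/
def IsPolyFreeOfLen : ℕ → (G : Type u) → [Group G] → Prop
  | 0, G, _ => Subsingleton G
  | n + 1, G, _ => ∃ (N : Subgroup G) (_ : N.Normal),
      IsPolyFreeOfLen n N ∧ IsFreeGroup (G ⧸ N)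

/-- A group is poly-free if it admits a subnormal chain with free quotients. -/
def IsPolyFree (G : Type u) [Group G] : Prop := ∃ n, IsPolyFreeOfLen n G

/-- Normally poly-free with a chain of length `n`: a chain
`1 = G₀ ≤ G₁ ≤ ⋯ ≤ Gₙ = G` with every `Gᵢ` normal in `G` and every quotient
`Gᵢ₊₁/Gᵢ` a free group (expressed via a surjection onto a free group whose
kernel is the previous term). -/
def IsNormallyPolyFreeOfLen (n : ℕ) (G : Type u) [Group G] : Prop :=
  ∃ c : Fin (n + 1) → Subgroup G,
    c 0 = ⊥ ∧ c (Fin.last n) = ⊤ ∧ (∀ i : Fin n, c i.castSucc ≤ c i.succ) ∧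
    (∀ i, (c i).Normal) ∧
    ∀ i : Fin n, ∃ (F : Type u) (_ : Group F) (f : ↥(c i.succ) →* F),
      IsFreeGroup F ∧ Function.Surjective f ∧
      f.ker = (c i.castSucc).subgroupOf (c i.succ)

/-- A group is normally poly-free if it admits such a chain of some length. -/
def IsNormallyPolyFree (G : Type u) [Group G] : Prop :=
  ∃ n, IsNormallyPolyFreeOfLen n G


/-- The alternating product `x * y * x * ⋯` of length `n`. -/
def altProd {M : Type*} [Monoid M] (x y : M) : ℕ → M
  | 0 => 1
  | n + 1 => x * altProd y x n

/-- The dihedral Artin group with label `n`: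
`⟨x, y ∣ ⟨x,y⟩ⁿ = ⟨y,x⟩ⁿ⟩` where `⟨x,y⟩ⁿ` is the alternating product of length `n`,
with `x = FreeGroup.of true`, `y = FreeGroup.of false`. -/
abbrev DihedralArtin (n : ℕ) : Type :=
  PresentedGroup
    ({altProd (FreeGroup.of true) (FreeGroup.of false) n *
        (altProd (FreeGroup.of false) (FreeGroup.of true) n)⁻¹} : Set (FreeGroup Bool))

/-! Write `a_i = x^i y x^{-i-1}`. Conjugation by `x` shifts `a_i ↦ a_{i+1}`, and the relation
`⟨x,y⟩ⁿ = ⟨y,x⟩ⁿ` becomes `a₁ a₃ ⋯ = a₀ a₂ ⋯` (indices below `n`), which determines `a_{n-1}` as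
well as `a_{-1}` from `a₀, …, a_{n-2}`. So the shift is an automorphism `σ` of the free group
`F_{n-1}` on `a₀, …, a_{n-2}`, and `x ↦ t`, `y ↦ a₀ t` (with `t` generating `ℤ`) is an
isomorphism `A_{I_n} ≅ F_{n-1} ⋊_σ ℤ`. The chain `1 ⊴ F_{n-1} ⊴ F_{n-1} ⋊_σ ℤ` has free
quotients. -/

theorem isNormallyPolyFreeOfLen_two_of_surjective {G Q : Type u} [Group G] [Group Q]
    [IsFreeGroup Q] (f : G →* Q) (hf : Function.Surjective f) [IsFreeGroup f.ker] :
    IsNormallyPolyFreeOfLen 2 G := by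
  refine ⟨![⊥, f.ker, ⊤], rfl, rfl, ?_, ?_, ?_⟩
  · intro i
    fin_cases i
    exacts [bot_le, le_top]
  · intro i
    fin_cases i <;> simp only [Fin.zero_eta, Fin.mk_one, Fin.reduceFinMk, Matrix.cons_val] <;>
      infer_instance
  · intro i
    fin_cases i
    · refine ⟨f.ker, inferInstance, MonoidHom.id _, inferInstance, Function.surjective_id, ?_⟩
      change (MonoidHom.id f.ker).ker = (⊥ : Subgroup G).subgroupOf f.ker
      rw [MonoidHom.ker_id, Subgroup.bot_subgroupOf]
    · refine ⟨Q, inferInstance, f.comp (⊤ : Subgroup G).subtype, inferInstance,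
        fun q ↦ ?_, ?_⟩
      · obtain ⟨g, rfl⟩ := hf q
        exact ⟨⟨g, trivial⟩, rfl⟩
      · change (f.comp (⊤ : Subgroup G).subtype).ker = f.ker.subgroupOf ⊤
        rw [← MonoidHom.comap_ker, Subgroup.comap_subtype]

theorem isNormallyPolyFree_of_mulEquiv_semidirectProduct {G N Q : Type u} [Group G] [Group N]
    [Group Q] [IsFreeGroup N] [IsFreeGroup Q] {φ : Q →* MulAut N} (e : G ≃* N ⋊[φ] Q) :
    IsNormallyPolyFree G := by
  let f : G →* Q := SemidirectProduct.rightHom.comp e.toMonoidHom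
  have : IsFreeGroup f.ker := by
    have hker : f.ker = SemidirectProduct.rightHom.ker.map e.symm.toMonoidHom := by
      simp [f, MonoidHom.ker_comp_mulEquiv]
    exact IsFreeGroup.ofMulEquiv <|
      (MonoidHom.ofInjective SemidirectProduct.inl_injective).trans <|
      (MulEquiv.subgroupCongr SemidirectProduct.range_inl_eq_ker_rightHom).trans <|
      (e.symm.subgroupMap _).trans (MulEquiv.subgroupCongr hker.symm)
  exact ⟨2, isNormallyPolyFreeOfLen_two_of_surjective f
    (SemidirectProduct.rightHom_surjective.comp e.surjective)⟩

theorem map_altProd {M N : Type*} [Monoid M] [Monoid N] (f : M →* N) (x y : M) (k : ℕ) :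
    f (altProd x y k) = altProd (f x) (f y) k := by
  induction k generalizing x y with
  | zero => simp [altProd]
  | succ k ih => simp [altProd, ih]

section AltSides

variable {M N : Type*}

/-- `(g₀ g₂ g₄ ⋯, g₁ g₃ g₅ ⋯)`, all indices below `k`. When `x g_i x⁻¹ = g_{i+1}` and
`y = g₀ x`, this is `(⟨y,x⟩ᵏ x⁻ᵏ, ⟨x,y⟩ᵏ x⁻ᵏ)` (`altProd_eq_altSides`), so `AltRel k g` is the
dihedral Artin relation written in the letters `g_i`. -/
def altSides [Monoid M] : (ℕ → M) → ℕ → M × M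
  | _, 0 => (1, 1)
  | g, k + 1 => (g 0 * (altSides (fun i ↦ g (i + 1)) k).2, (altSides (fun i ↦ g (i + 1)) k).1)

def AltRel [Monoid M] (k : ℕ) (g : ℕ → M) : Prop := (altSides g k).1 = (altSides g k).2

section Monoid

variable [Monoid M] [Monoid N]

theorem altSides_map (f : M →* N) (g : ℕ → M) (k : ℕ) :
    altSides (fun i ↦ f (g i)) k = ((f (altSides g k).1), f (altSides g k).2) := by
  induction k generalizing g with
  | zero => simp [altSides]
  | succ k ih => simp [altSides, ih]

theorem altSides_congr {g g' : ℕ → M} {k : ℕ} (h : ∀ i < k, g i = g' i) :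
    altSides g k = altSides g' k := by
  induction k generalizing g g' with
  | zero => rfl
  | succ k ih =>
    simp only [altSides, h 0 k.succ_pos, ih fun i hi ↦ h (i + 1) (by omega)]

theorem altSides_succ_right (k : ℕ) :
    (∀ g : ℕ → M, altSides g (k + 1) = ((altSides g k).1 * g k, (altSides g k).2)) ∨
      ∀ g : ℕ → M, altSides g (k + 1) = ((altSides g k).1, (altSides g k).2 * g k) := by
  induction k with
  | zero => exact Or.inl fun g ↦ by simp [altSides]
  | succ k ih =>
    rcases ih with ih | ih
    · exact Or.inr fun g ↦ by rw [altSides, ih, altSides]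
    · exact Or.inl fun g ↦ by rw [altSides, ih, altSides, mul_assoc]

theorem AltRel.map {k : ℕ} {g : ℕ → M} (h : AltRel k g) (f : M →* N) :
    AltRel k fun i ↦ f (g i) := by
  rw [AltRel, altSides_map, h]

end Monoid

section Group

variable [Group M]

theorem altRel_succ_iff (g : ℕ → M) (k : ℕ) :
    AltRel (k + 1) g ↔
      g 0 = (altSides (fun i ↦ g (i + 1)) k).1 * ((altSides (fun i ↦ g (i + 1)) k).2)⁻¹ := by
  rw [AltRel, altSides, eq_mul_inv_iff_mul_eq]

theorem AltRel.last_eq {k : ℕ} {g g' : ℕ → M} (hg : AltRel (k + 1) g)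
    (hg' : AltRel (k + 1) g') (h : ∀ i < k, g i = g' i) : g k = g' k := by
  unfold AltRel at hg hg'
  rcases altSides_succ_right (M := M) k with hk | hk <;>
    simp only [hk, altSides_congr h] at hg hg'
  · exact mul_left_cancel (hg.trans hg'.symm)
  · exact mul_left_cancel (hg.symm.trans hg')

theorem AltRel.head_eq {k : ℕ} {g g' : ℕ → M} (hg : AltRel (k + 1) g)
    (hg' : AltRel (k + 1) g') (h : ∀ i < k, g (i + 1) = g' (i + 1)) : g 0 = g' 0 := by
  rw [altRel_succ_iff] at hg hg'
  rw [hg, hg', altSides_congr h]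

theorem exists_altRel_extend_right (g : ℕ → M) (k : ℕ) :
    ∃ g' : ℕ → M, AltRel (k + 1) g' ∧ ∀ i < k, g' i = g i := by
  set s := altSides g k
  have hs (w : M) : altSides (Function.update g k w) k = s :=
    altSides_congr fun i hi ↦ Function.update_of_ne hi.ne _ _
  rcases altSides_succ_right (M := M) k with hk | hk
  · refine ⟨Function.update g k (s.1⁻¹ * s.2), ?_, fun i hi ↦ Function.update_of_ne hi.ne _ _⟩
    simp [AltRel, hk, hs]
  · refine ⟨Function.update g k (s.2⁻¹ * s.1), ?_, fun i hi ↦ Function.update_of_ne hi.ne _ _⟩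
    simp [AltRel, hk, hs]

theorem exists_altRel_extend_left (g : ℕ → M) (k : ℕ) :
    ∃ g' : ℕ → M, AltRel (k + 1) g' ∧ ∀ i, g' (i + 1) = g i :=
  ⟨fun | 0 => (altSides g k).1 * ((altSides g k).2)⁻¹ | i + 1 => g i,
    (altRel_succ_iff _ k).2 rfl, fun _ ↦ rfl⟩

theorem altProd_eq_altSides {x y : M} {g : ℕ → M} (hy : y = g 0 * x) (k : ℕ)
    (hconj : ∀ i, i + 1 < k → x * g i * x⁻¹ = g (i + 1)) :
    altProd y x k = (altSides g k).1 * x ^ k ∧ altProd x y k = (altSides g k).2 * x ^ k := by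
  induction k with
  | zero => simp [altProd, altSides]
  | succ k ih =>
    obtain ⟨ih₁, ih₂⟩ := ih fun i hi ↦ hconj i (by omega)
    have hshift : altSides (fun i ↦ g (i + 1)) k =
        (x * (altSides g k).1 * x⁻¹, x * (altSides g k).2 * x⁻¹) := by
      rw [altSides_congr (g' := fun i ↦ (MulAut.conj x).toMonoidHom (g i))
        fun i hi ↦ (hconj i (by omega)).symm, altSides_map]
      rfl
    rw [altProd, altProd, altSides, ih₁, ih₂, hshift, hy, pow_succ']
    constructor <;> group

theorem altProd_eq_iff_altRel {x y : M} {g : ℕ → M} (hy : y = g 0 * x) {k : ℕ}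
    (hconj : ∀ i, i + 1 < k → x * g i * x⁻¹ = g (i + 1)) :
    altProd x y k = altProd y x k ↔ AltRel k g := by
  obtain ⟨h₁, h₂⟩ := altProd_eq_altSides hy k hconj
  rw [h₁, h₂, mul_left_inj, AltRel, eq_comm]

end Group

end AltSides

theorem map_mulAut_zpow_apply {A B : Type*} [Group A] [Group B] (f : A →* B) {e₁ : MulAut A}
    {e₂ : MulAut B} (h : ∀ a, f (e₁ a) = e₂ (f a)) (k : ℤ) (a : A) :
    f ((e₁ ^ k) a) = (e₂ ^ k) (f a) := by
  induction k using Int.induction_on generalizing a with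
  | zero => rfl
  | succ k ih => rw [zpow_add_one, zpow_add_one, MulAut.mul_apply, MulAut.mul_apply, ih, h]
  | pred k ih =>
    rw [zpow_sub_one, zpow_sub_one, MulAut.mul_apply, MulAut.mul_apply, ih,
      ← MulAut.inv_apply_self _ e₂ (f _), ← h, MulAut.apply_inv_self]

namespace DihedralArtin

section Monodromy

variable (m : ℕ)

def freeGen (i : ℕ) : FreeGroup (Fin m) := if h : i < m then FreeGroup.of ⟨i, h⟩ else 1

theorem freeGen_val (j : Fin m) : freeGen m j = FreeGroup.of j := dif_pos j.isLt

/-- The free generators followed by the letter forced by the relation in position `m`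
(the image of `x^m y x^{-m-1}`). -/
noncomputable def freeGenRight : ℕ → FreeGroup (Fin m) :=
  (exists_altRel_extend_right (freeGen m) m).choose

/-- The free generators preceded by the letter forced by the relation in position `0`
(the image of `x⁻¹ y`). -/
noncomputable def freeGenLeft : ℕ → FreeGroup (Fin m) :=
  (exists_altRel_extend_left (freeGen m) m).choose

theorem altRel_freeGenRight : AltRel (m + 1) (freeGenRight m) :=
  (exists_altRel_extend_right (freeGen m) m).choose_spec.1

theorem freeGenRight_of_lt {i : ℕ} (hi : i < m) : freeGenRight m i = freeGen m i :=
  (exists_altRel_extend_right (freeGen m) m).choose_spec.2 i hi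

theorem altRel_freeGenLeft : AltRel (m + 1) (freeGenLeft m) :=
  (exists_altRel_extend_left (freeGen m) m).choose_spec.1

theorem freeGenLeft_succ (i : ℕ) : freeGenLeft m (i + 1) = freeGen m i :=
  (exists_altRel_extend_left (freeGen m) m).choose_spec.2 i

variable {m}

theorem map_freeGenRight {M : Type*} [Group M] (f : FreeGroup (Fin m) →* M) {a : ℕ → M}
    (ha : AltRel (m + 1) a) (hf : ∀ i < m, f (freeGen m i) = a i) {i : ℕ} (hi : i ≤ m) :
    f (freeGenRight m i) = a i := by
  obtain hi | hi := hi.lt_or_eq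
  · rw [freeGenRight_of_lt m hi, hf i hi]
  · rw [hi]
    refine ((altRel_freeGenRight m).map f).last_eq ha fun j hj ↦ ?_
    rw [freeGenRight_of_lt m hj, hf j hj]

theorem map_freeGenLeft {M : Type*} [Group M] (f : FreeGroup (Fin m) →* M) {a : ℕ → M}
    (ha : AltRel (m + 1) a) (hf : ∀ i < m, f (freeGen m i) = a (i + 1)) {i : ℕ} (hi : i ≤ m) :
    f (freeGenLeft m i) = a i := by
  cases i with
  | zero =>
    refine ((altRel_freeGenLeft m).map f).head_eq ha fun j hj ↦ ?_
    rw [freeGenLeft_succ, hf j hj]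
  | succ i => rw [freeGenLeft_succ, hf i hi]

variable (m)

/-- Conjugation by `x` on the kernel: `a_i ↦ a_{i+1}`. -/
noncomputable def monodromyHom : FreeGroup (Fin m) →* FreeGroup (Fin m) :=
  FreeGroup.lift fun j ↦ freeGenRight m (j + 1)

noncomputable def monodromyInvHom : FreeGroup (Fin m) →* FreeGroup (Fin m) :=
  FreeGroup.lift fun j ↦ freeGenLeft m j

variable {m}

theorem monodromyHom_freeGen {i : ℕ} (hi : i < m) :
    monodromyHom m (freeGen m i) = freeGenRight m (i + 1) := by
  lift i to Fin m using hi
  rw [freeGen_val, monodromyHom, FreeGroup.lift_apply_of]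

theorem monodromyInvHom_freeGen {i : ℕ} (hi : i < m) :
    monodromyInvHom m (freeGen m i) = freeGenLeft m i := by
  lift i to Fin m using hi
  rw [freeGen_val, monodromyInvHom, FreeGroup.lift_apply_of]

variable (m)

theorem monodromyInvHom_comp_monodromyHom :
    (monodromyInvHom m).comp (monodromyHom m) = MonoidHom.id _ := by
  refine FreeGroup.ext_hom _ _ fun j ↦ ?_
  rw [MonoidHom.comp_apply, ← freeGen_val, monodromyHom_freeGen j.isLt,
    map_freeGenRight _ (altRel_freeGenLeft m) (fun i hi ↦ monodromyInvHom_freeGen hi) j.isLt,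
    freeGenLeft_succ, MonoidHom.id_apply]

theorem monodromyHom_comp_monodromyInvHom :
    (monodromyHom m).comp (monodromyInvHom m) = MonoidHom.id _ := by
  refine FreeGroup.ext_hom _ _ fun j ↦ ?_
  rw [MonoidHom.comp_apply, ← freeGen_val, monodromyInvHom_freeGen j.isLt,
    map_freeGenLeft _ (altRel_freeGenRight m) (fun i hi ↦ monodromyHom_freeGen hi) j.isLt.le,
    freeGenRight_of_lt m j.isLt, MonoidHom.id_apply]

noncomputable def monodromy : MulAut (FreeGroup (Fin m)) :=
  MonoidHom.toMulEquiv _ _ (monodromyInvHom_comp_monodromyHom m)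
    (monodromyHom_comp_monodromyInvHom m)

theorem monodromy_apply (a : FreeGroup (Fin m)) : monodromy m a = monodromyHom m a := rfl

end Monodromy

section Presentation

variable (n : ℕ)

def x : DihedralArtin n := PresentedGroup.of true

def y : DihedralArtin n := PresentedGroup.of false

def kerGen (i : ℕ) : DihedralArtin n := x n ^ i * y n * (x n ^ (i + 1))⁻¹

theorem y_eq_kerGen_zero_mul : y n = kerGen n 0 * x n := by
  simp [kerGen]

theorem x_mul_kerGen_mul_inv (i : ℕ) : x n * kerGen n i * (x n)⁻¹ = kerGen n (i + 1) := by
  simp only [kerGen, pow_succ]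
  group

theorem altProd_x_y_eq : altProd (x n) (y n) n = altProd (y n) (x n) n := by
  rw [x, y, PresentedGroup.of, PresentedGroup.of, ← map_altProd, ← map_altProd]
  exact PresentedGroup.mk_eq_mk_of_mul_inv_mem rfl

theorem altRel_kerGen : AltRel n (kerGen n) :=
  (altProd_eq_iff_altRel (y_eq_kerGen_zero_mul n) fun i _ ↦ x_mul_kerGen_mul_inv n i).1
    (altProd_x_y_eq n)

end Presentation

section MappingTorus

variable (m : ℕ)

abbrev MappingTorus := FreeGroup (Fin m) ⋊[zpowersHom _ (monodromy m)] Multiplicative ℤ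

noncomputable def MappingTorus.t : MappingTorus m := SemidirectProduct.inr (Multiplicative.ofAdd 1)

variable {m}

theorem MappingTorus.t_mul_inl_mul_inv (a : FreeGroup (Fin m)) :
    t m * SemidirectProduct.inl a * (t m)⁻¹ = SemidirectProduct.inl (monodromy m a) := by
  rw [t, ← map_inv, ← SemidirectProduct.inl_aut]
  simp

variable (m)

noncomputable def toMappingTorus : DihedralArtin (m + 1) →* MappingTorus m :=
  PresentedGroup.toGroup
    (f := fun b ↦ cond b (MappingTorus.t m)
      (SemidirectProduct.inl (freeGenRight m 0) * MappingTorus.t m)) <| by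
    rintro r rfl
    rw [map_mul, map_inv, map_altProd, map_altProd, FreeGroup.lift_apply_of,
      FreeGroup.lift_apply_of, mul_inv_eq_one]
    refine (altProd_eq_iff_altRel rfl fun i hi ↦ ?_).2 ((altRel_freeGenRight m).map _)
    rw [cond_true, MappingTorus.t_mul_inl_mul_inv, monodromy_apply,
      freeGenRight_of_lt m (by omega), monodromyHom_freeGen (by omega)]

theorem toMappingTorus_x : toMappingTorus m (x _) = MappingTorus.t m :=
  PresentedGroup.toGroup.of _

theorem toMappingTorus_y :
    toMappingTorus m (y _) = SemidirectProduct.inl (freeGenRight m 0) * MappingTorus.t m :=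
  PresentedGroup.toGroup.of _

noncomputable def kerHom : FreeGroup (Fin m) →* DihedralArtin (m + 1) :=
  FreeGroup.lift fun j ↦ kerGen (m + 1) j

variable {m}

theorem kerHom_freeGen {i : ℕ} (hi : i < m) : kerHom m (freeGen m i) = kerGen (m + 1) i := by
  lift i to Fin m using hi
  rw [freeGen_val, kerHom, FreeGroup.lift_apply_of]

theorem kerHom_freeGenRight {i : ℕ} (hi : i ≤ m) :
    kerHom m (freeGenRight m i) = kerGen (m + 1) i :=
  map_freeGenRight _ (altRel_kerGen (m + 1)) (fun _ ↦ kerHom_freeGen) hi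

theorem kerHom_monodromy (a : FreeGroup (Fin m)) :
    kerHom m (monodromy m a) = x _ * kerHom m a * (x _)⁻¹ := by
  suffices (kerHom m).comp (monodromyHom m) = (MulAut.conj (x _)).toMonoidHom.comp (kerHom m) from
    DFunLike.congr_fun this a
  refine FreeGroup.ext_hom _ _ fun j ↦ ?_
  rw [MonoidHom.comp_apply, MonoidHom.comp_apply, ← freeGen_val, monodromyHom_freeGen j.isLt,
    kerHom_freeGenRight j.isLt, kerHom_freeGen j.isLt]
  exact (x_mul_kerGen_mul_inv _ _).symm

variable (m)

noncomputable def ofMappingTorus : MappingTorus m →* DihedralArtin (m + 1) :=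
  SemidirectProduct.lift (kerHom m) (zpowersHom _ (x _)) fun g ↦ MonoidHom.ext fun a ↦ by
    simpa [map_zpow] using map_mulAut_zpow_apply (kerHom m) kerHom_monodromy g.toAdd a

variable {m}

theorem ofMappingTorus_inl (a : FreeGroup (Fin m)) :
    ofMappingTorus m (SemidirectProduct.inl a) = kerHom m a :=
  SemidirectProduct.lift_inl _ _ _ _

theorem ofMappingTorus_t : ofMappingTorus m (MappingTorus.t m) = x _ := by
  simp [ofMappingTorus, MappingTorus.t]

variable (m)

theorem ofMappingTorus_comp_toMappingTorus :
    (ofMappingTorus m).comp (toMappingTorus m) = MonoidHom.id _ := by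
  refine PresentedGroup.ext fun b ↦ ?_
  cases b
  · change ofMappingTorus m (toMappingTorus m (y _)) = y _
    rw [toMappingTorus_y, map_mul, ofMappingTorus_inl, ofMappingTorus_t,
      kerHom_freeGenRight m.zero_le, y_eq_kerGen_zero_mul]
  · change ofMappingTorus m (toMappingTorus m (x _)) = x _
    rw [toMappingTorus_x, ofMappingTorus_t]

variable {m} in
theorem toMappingTorus_kerGen {i : ℕ} (hi : i ≤ m) :
    toMappingTorus m (kerGen (m + 1) i) = SemidirectProduct.inl (freeGenRight m i) := by
  induction i with
  | zero =>
    rw [eq_mul_inv_of_mul_eq (y_eq_kerGen_zero_mul (m + 1)).symm, map_mul, map_inv,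
      toMappingTorus_x, toMappingTorus_y, mul_inv_cancel_right]
  | succ i ih =>
    rw [← x_mul_kerGen_mul_inv, map_mul, map_mul, map_inv, toMappingTorus_x, ih (by omega),
      MappingTorus.t_mul_inl_mul_inv, monodromy_apply, freeGenRight_of_lt m (by omega),
      monodromyHom_freeGen (by omega)]

theorem toMappingTorus_comp_ofMappingTorus :
    (toMappingTorus m).comp (ofMappingTorus m) = MonoidHom.id _ := by
  refine SemidirectProduct.hom_ext (FreeGroup.ext_hom _ _ fun j ↦ ?_) (MonoidHom.ext_mint ?_)
  · simp only [MonoidHom.comp_apply, MonoidHom.id_apply]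
    rw [ofMappingTorus_inl, ← freeGen_val, kerHom_freeGen j.isLt,
      toMappingTorus_kerGen j.isLt.le, freeGenRight_of_lt m j.isLt]
  · simp only [MonoidHom.comp_apply, MonoidHom.id_apply]
    rw [← MappingTorus.t, ofMappingTorus_t, toMappingTorus_x]

noncomputable def mulEquivMappingTorus : DihedralArtin (m + 1) ≃* MappingTorus m :=
  MonoidHom.toMulEquiv _ _ (ofMappingTorus_comp_toMappingTorus m)
    (toMappingTorus_comp_ofMappingTorus m)

end MappingTorus

end DihedralArtin

/-- Every dihedral Artin group (two generators, edge label `n ≥ 2`) is normally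
poly-free. -/
theorem dihedralArtin_isNormallyPolyFree (n : ℕ) (hn : 2 ≤ n) :
    IsNormallyPolyFree (DihedralArtin n) := by
  obtain ⟨m, rfl⟩ : ∃ m, n = m + 1 := ⟨n - 1, by omega⟩
  have : IsFreeGroup (Multiplicative ℤ) :=
    IsFreeGroup.ofMulEquiv (FreeGroup.mulEquivIntOfUnique (α := Unit))
  exact isNormallyPolyFree_of_mulEquiv_semidirectProduct (DihedralArtin.mulEquivMappingTorus m)
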